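/- Let C > 0 be the constant from the variance upper bound, let A and B ≥ 3 satisfy B²(log B) < A ≤ B³(log B)⁻⁴(log log B)⁻¹, and let 0 < δ < C/3. Then #{a ∈ 𝕃(A) : |N_a(B) − N_a^loc(B)| > B³/(|a|·(log log B)^δ)} ≪ A⁴/(log log A)^δ, where |a| = maxᵢ|aᵢ|. -/

import Mathlib

open Filter MeasureTheory Finset Topology
open scoped ENNReal

noncomputable section

/-- Euclidean norm of an integer quadruple. -/
def znorm (a : Fin 4 → ℤ) : ℝ := Real.sqrt (∑ i, ((a i : ℝ)) ^ 2)

/-- Euclidean norm of a natural-number quadruple. -/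
def pnorm (x : Fin 4 → ℕ) : ℝ := Real.sqrt (∑ i, ((x i : ℝ)) ^ 2)

/-- Sup-norm `|a| = maxᵢ |aᵢ|` of an integer quadruple. -/
def snorm (a : Fin 4 → ℤ) : ℕ := Finset.univ.sup fun i => (a i).natAbs

/-- Min of the absolute values of the coordinates. -/
def minAbs (a : Fin 4 → ℤ) : ℕ := Finset.univ.inf' Finset.univ_nonempty fun i => (a i).natAbs

/-- `a` is primitive: all coordinates nonzero and gcd of the coordinates is 1. -/
def IsPrimitive (a : Fin 4 → ℤ) : Prop := (∀ i, a i ≠ 0) ∧ Finset.univ.gcd a = 1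

/-- `a` is locally solvable: it is primitive, its coordinates are not all of the same
sign, and for every prime `p` the congruence `⟨a,x⟩ ≡ 0 (mod p)` has a solution in the
reduced residues mod `p`. -/
def IsLocSolv (a : Fin 4 → ℤ) : Prop :=
  IsPrimitive a ∧ ¬ ((∀ i, 0 < a i) ∨ (∀ i, a i < 0)) ∧
  ∀ p : ℕ, p.Prime → ∃ x : Fin 4 → (ZMod p)ˣ,
    ∑ i, (a i : ZMod p) * ((x i : (ZMod p)ˣ) : ZMod p) = 0

/-- The set `L(a)` of quadruples of primes solving `⟨a,p⟩ = 0`. -/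
def Lsol (a : Fin 4 → ℤ) : Set (Fin 4 → ℕ) :=
  {p | (∀ i, (p i).Prime) ∧ ∑ i, a i * (p i : ℤ) = 0}

/-- `𝔪(a)`: the minimum of `|p|` over prime solutions `p ∈ L(a)`, and `∞` if there is
no solution. -/
def mfrak (a : Fin 4 → ℤ) : ℝ≥0∞ :=
  ⨅ p ∈ Lsol a, ((Finset.univ.sup p : ℕ) : ℝ≥0∞)

/-- The condition `𝔪(a)³ ≤ |a|·(log |a|)⁴·(log log |a|)`. -/
def SmallSol (a : Fin 4 → ℤ) : Prop :=
  (mfrak a) ^ 3 ≤ ENNReal.ofReal ((snorm a : ℝ) * (Real.log (snorm a)) ^ 4 *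
    Real.log (Real.log (snorm a)))

/-- `𝕃^loc(A)`. -/
def LlocSet (A : ℝ) : Set (Fin 4 → ℤ) := {a | IsLocSolv a ∧ znorm a ≤ A}

/-- `𝕃(A)`. -/
def LSet (A : ℝ) : Set (Fin 4 → ℤ) := {a | IsPrimitive a ∧ znorm a ≤ A}

/-- `𝒫(B)`: quadruples of primes of sup-norm at most `B`. -/
def PP (B : ℝ) : Set (Fin 4 → ℕ) := {x | ∀ i, (x i).Prime ∧ (x i : ℝ) ≤ B}

/-- The counting function `N_a(B)`. -/
def NB (a : Fin 4 → ℤ) (B : ℝ) : ℝ :=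
  (Real.log B) ^ 4 * (Set.ncard {x | x ∈ PP B ∧ ∑ i, a i * (x i : ℤ) = 0} : ℝ)

/-- `w = log log B / log log log B`. -/
def wB (B : ℝ) : ℝ := Real.log (Real.log B) / Real.log (Real.log (Real.log B))

/-- `W = ∏_{p ≤ w} p^(⌈log w/log p⌉ + 1)`. -/
def WB (B : ℝ) : ℕ :=
  ∏ p ∈ Finset.filter Nat.Prime (Finset.range (⌊wB B⌋₊ + 1)),
    p ^ (⌈Real.log (wB B) / Real.log (p : ℝ)⌉₊ + 1)

/-- `rad(W) = ∏_{p ≤ w} p`. -/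
def radWB (B : ℝ) : ℕ :=
  ∏ p ∈ Finset.filter Nat.Prime (Finset.range (⌊wB B⌋₊ + 1)), p

/-- The local counting function `N_a^loc(B)`; the summation condition is
`a ∈ Λ_x^(W) ∩ 𝒞_x^(α)` with `α = log B`. -/
def NlocB (a : Fin 4 → ℤ) (B : ℝ) : ℝ :=
  (Real.log B) ^ 4 * (Real.log B * (WB B : ℝ) / znorm a) *
    ∑ᶠ x ∈ {x : Fin 4 → ℕ | x ∈ PP B ∧ ((WB B : ℤ) ∣ ∑ i, a i * (x i : ℤ)) ∧
      |∑ i, (x i : ℝ) * (a i : ℝ)| ≤ pnorm x * znorm a / (2 * Real.log B)},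
      1 / pnorm x

/-- Gram determinant `‖u‖²‖v‖² − ⟨u,v⟩²` of a pair of real vectors. -/
def gram2 (u v : Fin 4 → ℝ) : ℝ :=
  (∑ i, u i ^ 2) * (∑ i, v i ^ 2) - (∑ i, u i * v i) ^ 2

/-- Determinant of a rank-2 lattice `S ⊆ ℤ⁴`: for such a lattice it is the minimum of
`det(ℤu ⊕ ℤv) = √(‖u‖²‖v‖² − ⟨u,v⟩²)` over linearly independent pairs `u, v ∈ S`
(the minimum being attained precisely at bases of `S`). -/
def latDet2 (S : Set (Fin 4 → ℤ)) : ℝ :=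
  sInf {d : ℝ | ∃ u ∈ S, ∃ v ∈ S,
    (∀ m n : ℤ, m • u + n • v = 0 → m = 0 ∧ n = 0) ∧
    d = Real.sqrt (gram2 (fun i => (u i : ℝ)) (fun i => (v i : ℝ)))}

/-- `det(Λ_x ∩ Λ_y)` for quadruples of primes `x, y`. -/
def detXY (x y : Fin 4 → ℕ) : ℝ :=
  latDet2 {z | (∑ i, (x i : ℤ) * z i) = 0 ∧ (∑ i, (y i : ℤ) * z i) = 0}

/-- `Ω(B)`: pairs of distinct quadruples of primes of size at most `B`. -/
def OmegaB (B : ℝ) : Set ((Fin 4 → ℕ) × (Fin 4 → ℕ)) :=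
  {p | p.1 ∈ PP B ∧ p.2 ∈ PP B ∧ p.1 ≠ p.2}

/-- `E(B)`. -/
def EB (B : ℝ) : ℝ :=
  (Real.log B) ^ 8 * ∑ᶠ p ∈ OmegaB B, 1 / detXY p.1 p.2

/-- `𝒢(x,y)`: the gcd of the 2×2 minors of the matrix with columns `x, y`. -/
def Gcal (x y : Fin 4 → ℕ) : ℤ :=
  Finset.univ.gcd fun q : Fin 4 × Fin 4 =>
    (x q.1 : ℤ) * (y q.2 : ℤ) - (x q.2 : ℤ) * (y q.1 : ℤ)

/-- `Δ(x,y) = ‖x‖‖y‖/det(ℤx ⊕ ℤy)`. -/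
def DeltaXY (x y : Fin 4 → ℕ) : ℝ :=
  pnorm x * pnorm y / Real.sqrt (gram2 (fun i => (x i : ℝ)) (fun i => (y i : ℝ)))

/-- `ℰ_{x,y}(B) = min{1, Δ(x,y)²/α²} + 𝟏[𝒢(x,y) ∤ W/rad(W)]`. -/
def EcalXY (x y : Fin 4 → ℕ) (B : ℝ) : ℝ :=
  min 1 (DeltaXY x y ^ 2 / (Real.log B) ^ 2) +
  (if Gcal x y ∣ ((WB B / radWB B : ℕ) : ℤ) then 0 else 1)

/-- `F(B)`. -/
def FB (B : ℝ) : ℝ :=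
  (Real.log B) ^ 8 * ∑ᶠ p ∈ OmegaB B, EcalXY p.1 p.2 B / detXY p.1 p.2

/-- `ζ(2)`. -/
def zeta2 : ℝ := ∑' n : ℕ, (1 : ℝ) / (n + 1) ^ 2

/-- `{a ∈ ℤ⁴_prim : ‖a‖ ≤ A}` with `ℤ⁴_prim` the tuples of coprime coordinates. -/
def primA (A : ℝ) : Set (Fin 4 → ℤ) := {a | Finset.univ.gcd a = 1 ∧ znorm a ≤ A}

/-- `D(A,B)`. -/
def DAB (A B : ℝ) : ℝ :=
  (∑ᶠ a ∈ primA A, NB a B ^ 2) - (Real.log B) ^ 4 * ∑ᶠ a ∈ primA A, NB a B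

/-- `Δ_a^mix(B)`. -/
def DeltaMix (a : Fin 4 → ℤ) (B : ℝ) : ℝ :=
  (Real.log B) ^ 8 * (Real.log B * (WB B : ℝ) / znorm a) *
    ∑ᶠ x ∈ {x : Fin 4 → ℕ | x ∈ PP B ∧ ∑ i, a i * (x i : ℤ) = 0}, 1 / pnorm x

/-- `Δ_a^loc(B)`. -/
def DeltaLoc (a : Fin 4 → ℤ) (B : ℝ) : ℝ :=
  (Real.log B) ^ 8 * ((Real.log B) ^ 2 * (WB B : ℝ) ^ 2 / znorm a ^ 2) *
    ∑ᶠ x ∈ {x : Fin 4 → ℕ | x ∈ PP B ∧ ((WB B : ℤ) ∣ ∑ i, a i * (x i : ℤ)) ∧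
      |∑ i, (x i : ℝ) * (a i : ℝ)| ≤ pnorm x * znorm a / (2 * Real.log B)},
      1 / pnorm x ^ 2

/-- `D^mix(A,B)`. -/
def DmixAB (A B : ℝ) : ℝ :=
  (∑ᶠ a ∈ primA A, NB a B * NlocB a B) - ∑ᶠ a ∈ primA A, DeltaMix a B

/-- `D^loc(A,B)`. -/
def DlocAB (A B : ℝ) : ℝ :=
  (∑ᶠ a ∈ primA A, NlocB a B ^ 2) - ∑ᶠ a ∈ primA A, DeltaLoc a B

/-- `K(A,B)`. -/
def KAB (A B : ℝ) : ℝ :=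
  ∑ᶠ a ∈ primA A, ((Real.log B) ^ 4 * NB a B + DeltaMix a B + DeltaLoc a B)

/-- `τ(a,γ) = γ·vol({u ∈ 𝓑₄(1) ∩ ℝ⁴₊ : a ∈ 𝒞_u^(γ)})`. -/
def tauA (a : Fin 4 → ℤ) (γ : ℝ) : ℝ :=
  γ * (volume {u : Fin 4 → ℝ | Real.sqrt (∑ i, u i ^ 2) < 1 ∧ (∀ i, 0 < u i) ∧
      |∑ i, u i * (a i : ℝ)| ≤ Real.sqrt (∑ i, u i ^ 2) * znorm a / (2 * γ)}).toReal

/-- The singular integral `𝔍_a(B) = τ(a, log B)`. -/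
def Jfrak (a : Fin 4 → ℤ) (B : ℝ) : ℝ := tauA a (Real.log B)

/-- `σ(a,Q) = (Q/φ(Q)⁴)·#{b ∈ ((ℤ/Qℤ)^*)⁴ : ⟨a,b⟩ ≡ 0 mod Q}`. -/
def sigmaA (a : Fin 4 → ℤ) (Q : ℕ) : ℝ :=
  (Q : ℝ) / (Nat.totient Q : ℝ) ^ 4 *
    (Nat.card {b : Fin 4 → (ZMod Q)ˣ |
      ∑ i, (a i : ZMod Q) * ((b i : (ZMod Q)ˣ) : ZMod Q) = 0} : ℝ)

/-- The truncated singular series `𝔖_a(B) = σ(a, W)`. -/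
def Sfrak (a : Fin 4 → ℤ) (B : ℝ) : ℝ := sigmaA a (WB B)

end

/-!
Every `a ∈ 𝕃(A)` has `|a| ≤ A`, so each bad `a` has
`|N_a(B) − N_a^loc(B)|² ≥ B⁶ / (A² (log log B)^{2δ})`. Chebyshev's inequality against the
variance bound then counts at most `≪ A⁴ (log log B)^{2δ − C}` bad `a`. Since
`A ≪ B³`, `log log A ≪ log log B`, and `(log log B)^{3δ − C}` is bounded because `3δ < C`.
-/

lemma abs_le_znorm (a : Fin 4 → ℤ) (i : Fin 4) : |(a i : ℝ)| ≤ znorm a := by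
  rw [znorm, ← Real.sqrt_sq_eq_abs]
  exact Real.sqrt_le_sqrt (single_le_sum (fun j _ => sq_nonneg (a j : ℝ)) (mem_univ i))

lemma snorm_le_znorm (a : Fin 4 → ℤ) : (snorm a : ℝ) ≤ znorm a := by
  obtain ⟨i, -, hi⟩ := exists_mem_eq_sup univ univ_nonempty fun i => (a i).natAbs
  rw [snorm, hi, Nat.cast_natAbs, Int.cast_abs]
  exact abs_le_znorm a i

lemma one_le_snorm {a : Fin 4 → ℤ} (h : univ.gcd a = 1) : 1 ≤ snorm a := by
  by_contra! h0
  have hzero : ∀ i ∈ univ, a i = 0 := fun i _ =>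
    Int.natAbs_eq_zero.mp (Nat.lt_one_iff.mp ((le_sup (f := fun i => (a i).natAbs)
      (mem_univ i)).trans_lt h0))
  simp [gcd_eq_zero_iff.mpr hzero] at h

lemma primA_finite (A : ℝ) : (primA A).Finite := by
  refine (Set.finite_Icc (fun _ : Fin 4 => -⌈A⌉) (fun _ => ⌈A⌉)).subset fun a ha => ?_
  have hcoord : ∀ i, |a i| ≤ ⌈A⌉ := fun i => by
    exact_mod_cast (abs_le_znorm a i).trans (ha.2.trans (Int.le_ceil A))
  exact ⟨fun i => neg_le_of_abs_le (hcoord i), fun i => le_of_abs_le (hcoord i)⟩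

lemma ncard_mul_le_finsum_mem {α : Type*} {s T : Set α} {f : α → ℝ} {t : ℝ}
    (hs : s.Finite) (hf : ∀ a ∈ s, 0 ≤ f a) (hTs : T ⊆ s) (hT : ∀ a ∈ T, t ≤ f a) :
    T.ncard * t ≤ ∑ᶠ a ∈ s, f a := by
  have hT_fin : T.Finite := hs.subset hTs
  rw [← hs.coe_toFinset, finsum_mem_coe_finset, Set.ncard_eq_toFinset_card T hT_fin,
    ← nsmul_eq_mul]
  calc hT_fin.toFinset.card • t ≤ ∑ a ∈ hT_fin.toFinset, f a :=
        card_nsmul_le_sum _ _ _ fun a ha => hT a (hT_fin.mem_toFinset.mp ha)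
    _ ≤ ∑ a ∈ hs.toFinset, f a :=
        sum_le_sum_of_subset_of_nonneg (Set.Finite.toFinset_subset_toFinset.mpr hTs)
          fun a ha _ => hf a (hs.mem_toFinset.mp ha)

lemma exists_log_le_mul_log {y₀ c : ℝ} (hy₀ : 1 < y₀) (hc : 0 < c) :
    ∃ K > 0, ∀ x y, y₀ ≤ y → 0 < x → x ≤ c * y → Real.log x ≤ K * Real.log y := by
  have hlog_y₀ : 0 < Real.log y₀ := Real.log_pos hy₀
  refine ⟨|Real.log c| / Real.log y₀ + 1, by positivity, fun x y hy hx hxy => ?_⟩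
  have hlog_y : Real.log y₀ ≤ Real.log y := Real.log_le_log (by linarith) hy
  have habs : |Real.log c| ≤ |Real.log c| / Real.log y₀ * Real.log y := by
    rw [div_mul_eq_mul_div, le_div_iff₀ hlog_y₀]
    exact mul_le_mul_of_nonneg_left hlog_y (abs_nonneg _)
  calc Real.log x ≤ Real.log (c * y) := Real.log_le_log hx hxy
    _ = Real.log c + Real.log y := Real.log_mul hc.ne' (by linarith)
    _ ≤ (|Real.log c| / Real.log y₀ + 1) * Real.log y := by
        linarith [le_abs_self (Real.log c)]

lemma one_lt_log_of_three_le {x : ℝ} (hx : 3 ≤ x) : 1 < Real.log x := by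
  linarith [Real.log_three_gt_d9, Real.log_le_log (by norm_num) hx]

lemma log_log_three_pos : 0 < Real.log (Real.log 3) :=
  Real.log_pos (one_lt_log_of_three_le le_rfl)

lemma log_log_three_le_log_log {B : ℝ} (hB : 3 ≤ B) :
    Real.log (Real.log 3) ≤ Real.log (Real.log B) :=
  Real.log_le_log (by linarith [one_lt_log_of_three_le le_rfl])
    (Real.log_le_log (by norm_num) hB)

lemma exists_log_log_le_mul_log_log :
    ∃ K > 0, ∀ A B : ℝ, 3 ≤ B → 3 ≤ A →
      A ≤ B ^ 3 * ((Real.log B) ^ 4)⁻¹ * (Real.log (Real.log B))⁻¹ →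
      Real.log (Real.log A) ≤ K * Real.log (Real.log B) := by
  set m := Real.log (Real.log 3)
  have hm : 0 < m := log_log_three_pos
  obtain ⟨K₁, hK₁, hlogA⟩ :=
    exists_log_le_mul_log (y₀ := 27) (by norm_num) (inv_pos.mpr hm)
  obtain ⟨K₂, hK₂, hloglogA⟩ :=
    exists_log_le_mul_log (y₀ := Real.log 3) (c := 3 * K₁) (one_lt_log_of_three_le le_rfl)
      (by positivity)
  refine ⟨K₂, hK₂, fun A B hB hA hAB => ?_⟩
  have hm_le : m ≤ Real.log (Real.log B) := log_log_three_le_log_log hB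
  have hA_le : A ≤ m⁻¹ * B ^ 3 := by
    have h4 : ((Real.log B) ^ 4)⁻¹ ≤ 1 :=
      inv_le_one_of_one_le₀ (one_le_pow₀ (one_lt_log_of_three_le hB).le)
    calc A ≤ B ^ 3 * ((Real.log B) ^ 4)⁻¹ * (Real.log (Real.log B))⁻¹ := hAB
      _ ≤ B ^ 3 * 1 * m⁻¹ := by
        have hL0 : 0 < Real.log (Real.log B) := hm.trans_le hm_le
        gcongr
      _ = m⁻¹ * B ^ 3 := by ring
  have hlogA_le : Real.log A ≤ 3 * K₁ * Real.log B := by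
    have h27 : (27 : ℝ) ≤ B ^ 3 :=
      calc (27 : ℝ) = 3 ^ 3 := by norm_num
        _ ≤ B ^ 3 := by gcongr
    calc Real.log A ≤ K₁ * Real.log (B ^ 3) := hlogA A (B ^ 3) h27 (by linarith) hA_le
      _ = 3 * K₁ * Real.log B := by rw [Real.log_pow]; push_cast; ring
  exact hloglogA _ _ (Real.log_le_log (by norm_num) hB)
    (zero_lt_one.trans (one_lt_log_of_three_le hA)) hlogA_le

lemma rpow_mul_rpow_le_of_le_mul {m L x K δ C : ℝ} (hm : 0 < m) (hL : m ≤ L) (hx : 0 ≤ x)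
    (hxL : x ≤ K * L) (hK : 0 ≤ K) (hδ : 0 ≤ δ) (hδC : 3 * δ ≤ C) :
    x ^ δ * L ^ (2 * δ - C) ≤ K ^ δ * m ^ (3 * δ - C) := by
  have hL0 : 0 < L := hm.trans_le hL
  calc x ^ δ * L ^ (2 * δ - C) ≤ (K ^ δ * L ^ δ) * L ^ (2 * δ - C) := by
        rw [← Real.mul_rpow hK hL0.le]
        gcongr
    _ = K ^ δ * L ^ (3 * δ - C) := by
        rw [mul_assoc, ← Real.rpow_add hL0]; ring_nf
    _ ≤ K ^ δ * m ^ (3 * δ - C) :=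
        mul_le_mul_of_nonneg_left (Real.rpow_le_rpow_of_nonpos hm hL (by linarith))
          (Real.rpow_nonneg hK δ)

def badApprox (A B δ : ℝ) : Set (Fin 4 → ℤ) :=
  {a | a ∈ primA A ∧
    B ^ 3 / ((snorm a : ℝ) * (Real.log (Real.log B)) ^ δ) < |NB a B - NlocB a B|}

lemma ncard_badApprox_le {A B K C δ : ℝ} (hA : 0 < A) (hB : 0 < B)
    (hL : 0 < Real.log (Real.log B))
    (hvar : ∑ᶠ a ∈ primA A, |NB a B - NlocB a B| ^ 2 ≤
      K * A ^ 2 * B ^ 6 / (Real.log (Real.log B)) ^ C) :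
    ((badApprox A B δ).ncard : ℝ) ≤ K * A ^ 4 * Real.log (Real.log B) ^ (2 * δ - C) := by
  set L := Real.log (Real.log B)
  set t := B ^ 3 / (A * L ^ δ) with ht_def
  have ht : 0 < t := by positivity
  have hbad : ∀ a ∈ badApprox A B δ, t ^ 2 ≤ |NB a B - NlocB a B| ^ 2 := by
    intro a ⟨haA, hlarge⟩
    have hsnorm : (0 : ℝ) < snorm a := by exact_mod_cast one_le_snorm haA.1
    have ht_le : t ≤ B ^ 3 / ((snorm a : ℝ) * L ^ δ) := by
      show B ^ 3 / (A * L ^ δ) ≤ _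
      gcongr
      exact (snorm_le_znorm a).trans haA.2
    exact pow_le_pow_left₀ ht.le (ht_le.trans hlarge.le) 2
  have hmarkov := (ncard_mul_le_finsum_mem (primA_finite A) (fun _ _ => sq_nonneg _)
    (fun a ha => ha.1) hbad).trans hvar
  calc ((badApprox A B δ).ncard : ℝ) = (badApprox A B δ).ncard * t ^ 2 / t ^ 2 := by
        field_simp
    _ ≤ K * A ^ 2 * B ^ 6 / L ^ C / t ^ 2 := by gcongr
    _ = K * A ^ 4 * L ^ (2 * δ - C) := by
        rw [ht_def, Real.rpow_sub hL, mul_comm 2 δ, Real.rpow_mul hL.le, Real.rpow_two]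
        field_simp

/-- Corollary 2.2: for any `C > 0` for which the variance bound holds and any
`0 < δ < C/3`, the number of `a ∈ 𝕃(A)` with
`|N_a(B) − N_a^loc(B)| > B³/(|a|(log log B)^δ)` is `≪ A⁴/(log log A)^δ`. -/
theorem number_of_bad_approximations :
    ∀ C K : ℝ, 0 < C → 0 < K →
      (∀ A B : ℝ, 3 ≤ B →
        B ^ 2 * Real.log B < A →
        A ≤ B ^ 3 * ((Real.log B) ^ 4)⁻¹ * (Real.log (Real.log B))⁻¹ →
        ∑ᶠ a ∈ primA A, |NB a B - NlocB a B| ^ 2 ≤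
          K * A ^ 2 * B ^ 6 / (Real.log (Real.log B)) ^ C) →
      ∀ δ : ℝ, 0 < δ → δ < C / 3 →
        ∃ K' > (0 : ℝ), ∀ A B : ℝ, 3 ≤ B →
          B ^ 2 * Real.log B < A →
          A ≤ B ^ 3 * ((Real.log B) ^ 4)⁻¹ * (Real.log (Real.log B))⁻¹ →
          (Set.ncard {a | a ∈ primA A ∧
              B ^ 3 / ((snorm a : ℝ) * (Real.log (Real.log B)) ^ δ) <
                |NB a B - NlocB a B|} : ℝ) ≤
            K' * A ^ 4 / (Real.log (Real.log A)) ^ δ := by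
  intro C K _ hK hvar δ hδ hδC
  obtain ⟨K₂, hK₂, hloglog⟩ := exists_log_log_le_mul_log_log
  set m := Real.log (Real.log 3)
  have hm : 0 < m := log_log_three_pos
  refine ⟨K * K₂ ^ δ * m ^ (3 * δ - C), by positivity, fun A B hB hA₁ hA₂ => ?_⟩
  set L := Real.log (Real.log B)
  set LA := Real.log (Real.log A)
  have hm_le : m ≤ L := log_log_three_le_log_log hB
  have hA : 3 ≤ A := by
    have : (3 : ℝ) ^ 2 * 1 ≤ B ^ 2 * Real.log B := by
      gcongr
      exact (one_lt_log_of_three_le hB).le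
    linarith
  have hLA : 0 < LA := Real.log_pos (one_lt_log_of_three_le hA)
  have hLA_le : LA ^ δ * L ^ (2 * δ - C) ≤ K₂ ^ δ * m ^ (3 * δ - C) :=
    rpow_mul_rpow_le_of_le_mul hm hm_le hLA.le (hloglog A B hB hA hA₂) hK₂.le hδ.le
      (by linarith)
  calc ((badApprox A B δ).ncard : ℝ) ≤ K * A ^ 4 * L ^ (2 * δ - C) :=
        ncard_badApprox_le (by linarith) (by linarith) (hm.trans_le hm_le) (hvar A B hB hA₁ hA₂)
    _ = K * A ^ 4 * (LA ^ δ * L ^ (2 * δ - C)) / LA ^ δ := by field_simp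
    _ ≤ K * A ^ 4 * (K₂ ^ δ * m ^ (3 * δ - C)) / LA ^ δ := by gcongr
    _ = K * K₂ ^ δ * m ^ (3 * δ - C) * A ^ 4 / LA ^ δ := by ring
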